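/- Let G and H be groups, Λ ⊆ G an approximate subgroup, φ : G → H a group homomorphism, and suppose φ(Λ) is finite. Then Λ² ∩ ker(φ) is an approximate subgroup commensurable to Λ. -/

import Mathlib

/-!
Since `ker φ` is a subgroup, `Λ² ∩ ker φ` is an approximate subgroup by the intersection lemma
for approximate subgroups. It lies in `Λ²`, which is covered by finitely many translates of `Λ`.
Conversely, as `φ(Λ)` is finite, choosing one point `t ∈ Λ` in each fibre of `φ` over `φ(Λ)` gives
finitely many `t` with every `x ∈ Λ` of the form `t * (t⁻¹ * x)` where `t⁻¹ * x ∈ Λ² ∩ ker φ`.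
-/

open Pointwise

def IsApproxSubgroup {G : Type*} [Group G] (Λ : Set G) : Prop :=
  (1 : G) ∈ Λ ∧ Λ⁻¹ = Λ ∧ ∃ F : Set G, F.Finite ∧ Λ * Λ ⊆ F * Λ

def SetCommensurable {G : Type*} [Group G] (A B : Set G) : Prop :=
  ∃ F : Set G, F.Finite ∧ A ⊆ F * B ∧ B ⊆ F * A

open Set

theorem isApproxSubgroup_iff_exists_isApproximateSubgroup {G : Type*} [Group G] {Λ : Set G} :
    IsApproxSubgroup Λ ↔ ∃ K : ℝ, IsApproximateSubgroup K Λ := by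
  constructor
  · rintro ⟨h1, hinv, F, hF, hcov⟩
    exact ⟨hF.toFinset.card, h1, hinv, hF.toFinset, le_rfl, by simpa [sq] using hcov⟩
  · rintro ⟨K, h1, hinv, F, -, hcov⟩
    exact ⟨h1, hinv, F, F.finite_toSet, by simpa [sq] using hcov⟩

theorem MonoidHom.exists_finite_subset_mul_inv_mul_inter_ker {G H : Type*} [Group G] [Group H]
    (φ : G →* H) {A : Set G} (hA : (φ '' A).Finite) :
    ∃ T : Set G, T.Finite ∧ A ⊆ T * (A⁻¹ * A ∩ φ.ker) := by
  choose s hs using fun y : φ '' A => y.2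
  have : Finite (φ '' A) := hA.to_subtype
  refine ⟨Set.range s, finite_range s, fun x hx => ?_⟩
  obtain ⟨hsA, hsx⟩ := hs ⟨φ x, x, hx, rfl⟩
  refine ⟨_, mem_range_self _, _, ⟨mul_mem_mul (inv_mem_inv.mpr hsA) hx, ?_⟩, mul_inv_cancel_left _ x⟩
  simp [MonoidHom.mem_ker, hsx]

theorem stmt18 {G H : Type*} [Group G] [Group H] (Λ : Set G)
    (hΛ : IsApproxSubgroup Λ) (φ : G →* H) (hfin : (φ '' Λ).Finite) :
    IsApproxSubgroup (Λ ^ 2 ∩ (φ.ker : Set G)) ∧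
    SetCommensurable (Λ ^ 2 ∩ (φ.ker : Set G)) Λ := by
  obtain ⟨K, hK⟩ := isApproxSubgroup_iff_exists_isApproximateSubgroup.mp hΛ
  have hΛker := hK.pow_inter_pow (IsApproximateSubgroup.subgroup (H := φ.ker)) le_rfl le_rfl
  rw [coe_set_pow two_ne_zero] at hΛker
  obtain ⟨-, hinv, F, hF, hΛF⟩ := hΛ
  obtain ⟨T, hT, hΛT⟩ := φ.exists_finite_subset_mul_inv_mul_inter_ker hfin
  rw [hinv, ← sq] at hΛT
  refine ⟨isApproxSubgroup_iff_exists_isApproximateSubgroup.mpr ⟨_, hΛker⟩, F ∪ T, hF.union hT,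
    ?_, hΛT.trans (mul_subset_mul_right subset_union_right)⟩
  calc Λ ^ 2 ∩ φ.ker ⊆ Λ * Λ := sq Λ ▸ inter_subset_left
    _ ⊆ F * Λ := hΛF
    _ ⊆ (F ∪ T) * Λ := mul_subset_mul_right subset_union_left
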